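/- arXiv:2009.00313 — 5 statements merged into one kernel-verified Lean document; each statement's English description precedes it below -/
import Mathlib

section
/- There exists a subgroup Γ of SL₂(ℤ) of finite index which is not a congruence subgroup; that is, Γ has finite index in SL₂(ℤ), but for every N ≥ 1 the kernel of the reduction homomorphism π_N : SL₂(ℤ) → SL₂(ℤ/Nℤ) is not contained in Γ. -/
open Matrix MatrixGroups

/-!
Sanov: `a = [[1,2],[0,1]]` and `b = [[1,0],[2,1]]` generate a free subgroup `F` of `SL₂(ℤ)`
(ping-pong on `ℤ² ∖ 0`), and `F ⊇ Γ(4)` by a Euclidean descent, so `F` has finite index. For a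
prime `p ≥ 5` let `Γ ⊆ F` be the kernel of the exponent sum of `a` modulo `p`; it has index `p`
in `F`. Modulo `p^k` the matrix `diag(2, 1/2)` is the image of a word `d`, and it conjugates
`u(t) = [[1,t],[0,1]]` to `u(4t)`; as `3` is invertible, the image `u(2)` of `a` is then the image
of a commutator `[d, a^s]`. Writing `N = p^k M` with `p ∤ M` and choosing `r ≡ 1 (mod p^(k+1))`,
`r ≡ s ≡ 0 (mod M)`, the word `a^r [d, a^s]⁻¹` reduces to `1` modulo `p^k` and modulo `M`, hence
lies in `Γ(N)`, while its exponent sum `r` is nonzero modulo `p`. Since `F` is free, its image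
is not in `Γ`.
-/

namespace Noncongruence

open CongruenceSubgroup
open scoped Pointwise

section Unipotent

variable {R : Type*} [CommRing R]

def upper (t : R) : SL(2, R) := ⟨!![1, t; 0, 1], by simp [det_fin_two_of]⟩

def lower (t : R) : SL(2, R) := ⟨!![1, 0; t, 1], by simp [det_fin_two_of]⟩

@[simp] lemma coe_upper (t : R) : (upper t : Matrix (Fin 2) (Fin 2) R) = !![1, t; 0, 1] := rfl

@[simp] lemma coe_lower (t : R) : (lower t : Matrix (Fin 2) (Fin 2) R) = !![1, 0; t, 1] := rfl

lemma upper_mul_upper (s t : R) : upper s * upper t = upper (s + t) := by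
  ext i j; fin_cases i <;> fin_cases j <;> simp [add_comm]

lemma lower_mul_lower (s t : R) : lower s * lower t = lower (s + t) := by
  ext i j; fin_cases i <;> fin_cases j <;> simp

@[simp] lemma upper_zero : upper (0 : R) = 1 := by
  ext i j; fin_cases i <;> fin_cases j <;> simp

@[simp] lemma lower_zero : lower (0 : R) = 1 := by
  ext i j; fin_cases i <;> fin_cases j <;> simp

lemma upper_inv (t : R) : (upper t)⁻¹ = upper (-t) :=
  inv_eq_of_mul_eq_one_right (by rw [upper_mul_upper, add_neg_cancel, upper_zero])

lemma lower_inv (t : R) : (lower t)⁻¹ = lower (-t) :=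
  inv_eq_of_mul_eq_one_right (by rw [lower_mul_lower, add_neg_cancel, lower_zero])

lemma upper_zpow (t : R) (n : ℤ) : upper t ^ n = upper (n * t) := by
  induction n using Int.induction_on with
  | zero => simp
  | succ k ih => rw [_root_.zpow_add_one, ih, upper_mul_upper]; push_cast; ring_nf
  | pred k ih => rw [_root_.zpow_sub_one, ih, upper_inv, upper_mul_upper]; push_cast; ring_nf

lemma lower_zpow (t : R) (n : ℤ) : lower t ^ n = lower (n * t) := by
  induction n using Int.induction_on with
  | zero => simp
  | succ k ih => rw [_root_.zpow_add_one, ih, lower_mul_lower]; push_cast; ring_nf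
  | pred k ih => rw [_root_.zpow_sub_one, ih, lower_inv, lower_mul_lower]; push_cast; ring_nf

lemma map_upper {S : Type*} [CommRing S] (f : R →+* S) (t : R) :
    SpecialLinearGroup.map f (upper t) = upper (f t) := by
  ext i j; fin_cases i <;> fin_cases j <;> simp

lemma map_lower {S : Type*} [CommRing S] (f : R →+* S) (t : R) :
    SpecialLinearGroup.map f (lower t) = lower (f t) := by
  ext i j; fin_cases i <;> fin_cases j <;> simp

lemma upper_smul (t : R) (v : Fin 2 → R) : upper t • v = ![v 0 + t * v 1, v 1] := by
  change !![1, t; 0, 1] *ᵥ v = _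
  ext i; fin_cases i <;> simp [mulVec, dotProduct, Fin.sum_univ_two]

lemma lower_smul (t : R) (v : Fin 2 → R) : lower t • v = ![v 0, v 1 + t * v 0] := by
  change !![1, 0; t, 1] *ᵥ v = _
  ext i; fin_cases i <;> simp [mulVec, dotProduct, Fin.sum_univ_two, add_comm]

lemma coe_upper_mul (t : R) (g : SL(2, R)) :
    ((upper t * g : SL(2, R)) : Matrix (Fin 2) (Fin 2) R) =
      !![g 0 0 + t * g 1 0, g 0 1 + t * g 1 1; g 1 0, g 1 1] := by
  ext i j; fin_cases i <;> fin_cases j <;> simp [mul_apply, Fin.sum_univ_two]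

lemma coe_lower_mul (t : R) (g : SL(2, R)) :
    ((lower t * g : SL(2, R)) : Matrix (Fin 2) (Fin 2) R) =
      !![g 0 0, g 0 1; g 1 0 + t * g 0 0, g 1 1 + t * g 0 1] := by
  ext i j; fin_cases i <;> fin_cases j <;> simp [mul_apply, Fin.sum_univ_two, add_comm]

end Unipotent

lemma mem_Gamma_iff_dvd {N : ℕ} {γ : SL(2, ℤ)} :
    γ ∈ Gamma N ↔ ∀ i j, (N : ℤ) ∣ γ i j - (1 : Matrix (Fin 2) (Fin 2) ℤ) i j := by
  simp [Gamma_mem, Fin.forall_fin_two, ← ZMod.intCast_zmod_eq_zero_iff_dvd, sub_eq_zero, and_assoc]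

lemma Gamma_le_Gamma_of_dvd {m n : ℕ} (h : m ∣ n) : Gamma n ≤ Gamma m := fun _ hγ =>
  mem_Gamma_iff_dvd.2 fun i j => (Int.natCast_dvd_natCast.2 h).trans (mem_Gamma_iff_dvd.1 hγ i j)

lemma Gamma_inf_Gamma_le_Gamma_mul {m n : ℕ} (h : m.Coprime n) :
    Gamma m ⊓ Gamma n ≤ Gamma (m * n) := fun _ hγ => by
  obtain ⟨hm, hn⟩ := Subgroup.mem_inf.1 hγ
  exact mem_Gamma_iff_dvd.2 fun i j => by
    exact_mod_cast (Nat.isCoprime_iff_coprime.2 h).mul_dvd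
      (mem_Gamma_iff_dvd.1 hm i j) (mem_Gamma_iff_dvd.1 hn i j)

def sanovGen : Bool → SL(2, ℤ)
  | true => upper 2
  | false => lower 2

def sanov : FreeGroup Bool →* SL(2, ℤ) := FreeGroup.lift sanovGen

-- The vector `0` is fixed by both generators, so it cannot lie in any of the (disjoint)
-- ping-pong sets; the ping-pong is played on the nonzero vectors.
def nonzeroVectors : SubMulAction SL(2, ℤ) (Fin 2 → ℤ) where
  carrier := {v | v ≠ 0}
  smul_mem' g v hv := by simpa [smul_eq_zero_iff_eq] using hv

@[simp] lemma mem_nonzeroVectors (v : Fin 2 → ℤ) : v ∈ nonzeroVectors ↔ v ≠ 0 := Iff.rfl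

lemma fin_two_ne_zero_iff {α : Type*} [Zero α] (v : Fin 2 → α) : v ≠ 0 ↔ v 0 ≠ 0 ∨ v 1 ≠ 0 := by
  rw [Ne, funext_iff, Fin.forall_fin_two]; tauto

-- With the entry `2` the ping-pong inequalities are not strict on the lines `|x| = |y|`:
-- the diagonal goes to `pingSet true` and the antidiagonal to `pongSet false`.
def pingSet : Bool → Set nonzeroVectors
  | true => {v | (v.1 1).natAbs ≤ (v.1 0).natAbs ∧ 0 ≤ v.1 0 * v.1 1}
  | false => {v | (v.1 0).natAbs < (v.1 1).natAbs ∧ 0 ≤ v.1 0 * v.1 1}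

def pongSet : Bool → Set nonzeroVectors
  | true => {v | (v.1 1).natAbs < (v.1 0).natAbs ∧ v.1 0 * v.1 1 < 0}
  | false => {v | (v.1 0).natAbs ≤ (v.1 1).natAbs ∧ v.1 0 * v.1 1 < 0}

lemma sanovGen_smul_compl_pongSet_subset (b : Bool) : sanovGen b • (pongSet b)ᶜ ⊆ pingSet b := by
  rw [Set.smul_set_subset_iff]
  rintro ⟨v, hv⟩ hmem
  cases b <;>
    simp only [pingSet, pongSet, Set.mem_compl_iff, Set.mem_ofPred_eq, SubMulAction.val_smul,
      sanovGen, upper_smul, lower_smul, cons_val_zero, cons_val_one, mem_nonzeroVectors,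
      fin_two_ne_zero_iff, mul_nonneg_iff, mul_neg_iff] at hv hmem ⊢ <;>
    omega

lemma sanovGen_inv_smul_compl_pingSet_subset (b : Bool) :
    (sanovGen b)⁻¹ • (pingSet b)ᶜ ⊆ pongSet b := by
  rw [Set.smul_set_subset_iff]
  rintro ⟨v, hv⟩ hmem
  cases b <;>
    simp only [pingSet, pongSet, Set.mem_compl_iff, Set.mem_ofPred_eq, SubMulAction.val_smul,
      sanovGen, upper_inv, lower_inv, upper_smul, lower_smul, cons_val_zero, cons_val_one,
      mem_nonzeroVectors, fin_two_ne_zero_iff, mul_nonneg_iff, mul_neg_iff] at hv hmem ⊢ <;>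
    omega

theorem sanov_injective : Function.Injective sanov := by
  refine FreeGroup.injective_lift_of_ping_pong sanovGen pingSet pongSet ?_ ?_ ?_ ?_
    sanovGen_smul_compl_pongSet_subset sanovGen_inv_smul_compl_pingSet_subset
  · rintro (_ | _)
    · exact ⟨⟨![0, 1], by simp⟩, by simp [pingSet]⟩
    · exact ⟨⟨![1, 0], by simp⟩, by simp [pingSet]⟩
  · rintro (_ | _) (_ | _) hij <;> simp only [ne_eq, not_true_eq_false] at hij <;>
      rw [Function.onFun, Set.disjoint_left] <;> rintro v ⟨h₁, h₂⟩ ⟨h₃, h₄⟩ <;> omega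
  · rintro (_ | _) (_ | _) hij <;> simp only [ne_eq, not_true_eq_false] at hij <;>
      rw [Function.onFun, Set.disjoint_left] <;> rintro v ⟨h₁, h₂⟩ ⟨h₃, h₄⟩ <;> omega
  · rintro (_ | _) (_ | _) <;> rw [Set.disjoint_left] <;> rintro v ⟨h₁, h₂⟩ ⟨h₃, h₄⟩ <;> omega

lemma sanov_of_true_zpow (n : ℤ) : sanov (FreeGroup.of true ^ n) = upper (2 * n) := by
  rw [map_zpow, sanov, FreeGroup.lift_apply_of, sanovGen, upper_zpow, Int.cast_id, mul_comm]

lemma sanov_of_false_zpow (n : ℤ) : sanov (FreeGroup.of false ^ n) = lower (2 * n) := by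
  rw [map_zpow, sanov, FreeGroup.lift_apply_of, sanovGen, lower_zpow, Int.cast_id, mul_comm]

lemma upper_mem_range_sanov {t : ℤ} (ht : 2 ∣ t) : upper t ∈ sanov.range := by
  obtain ⟨n, rfl⟩ := ht
  exact ⟨_, sanov_of_true_zpow n⟩

lemma lower_mem_range_sanov {t : ℤ} (ht : 2 ∣ t) : lower t ∈ sanov.range := by
  obtain ⟨n, rfl⟩ := ht
  exact ⟨_, sanov_of_false_zpow n⟩

lemma upper_mem_Gamma_two {t : ℤ} (ht : 2 ∣ t) : upper t ∈ Gamma 2 := by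
  simp [(ZMod.intCast_zmod_eq_zero_iff_dvd t 2).2 ht]

lemma lower_mem_Gamma_two {t : ℤ} (ht : 2 ∣ t) : lower t ∈ Gamma 2 := by
  simp [(ZMod.intCast_zmod_eq_zero_iff_dvd t 2).2 ht]

lemma eq_upper_of_apply_one_zero_eq_zero {g : SL(2, ℤ)} (hc : g 1 0 = 0) (ha : 4 ∣ g 0 0 - 1) :
    g = upper (g 0 1) := by
  have hdet : g 0 0 * g 1 1 = 1 := by
    have := g.det_coe
    rwa [det_fin_two, hc, mul_zero, sub_zero] at this
  have ha₁ : g 0 0 = 1 := by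
    rcases Int.eq_one_or_neg_one_of_mul_eq_one hdet with h | h <;> omega
  have hd₁ : g 1 1 = 1 := by rwa [ha₁, one_mul] at hdet
  ext i j; fin_cases i <;> fin_cases j <;> simp [ha₁, hd₁, hc]

lemma mem_range_sanov_of_mem_Gamma_two {g : SL(2, ℤ)} (hg : g ∈ Gamma 2) (ha : 4 ∣ g 0 0 - 1) :
    g ∈ sanov.range := by
  induction hn : (g 0 0).natAbs + (g 1 0).natAbs using Nat.strong_induction_on
    generalizing g with
  | _ n ih =>
  have hb : 2 ∣ g 0 1 := by simpa using mem_Gamma_iff_dvd.1 hg 0 1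
  have hc : 2 ∣ g 1 0 := by simpa using mem_Gamma_iff_dvd.1 hg 1 0
  by_cases hc₀ : g 1 0 = 0
  · rw [eq_upper_of_apply_one_zero_eq_zero hc₀ ha]
    exact upper_mem_range_sanov hb
  have step : ∀ h ∈ sanov.range, h ∈ Gamma 2 → 4 ∣ (h * g) 0 0 - 1 →
      ((h * g) 0 0).natAbs + ((h * g) 1 0).natAbs < n → g ∈ sanov.range :=
    fun h hh hh₂ h₄ hlt => (Subgroup.mul_mem_cancel_left _ hh).1
      (ih _ hlt (Subgroup.mul_mem _ hh₂ hg) h₄ rfl)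
  have h₂ : (2 : ℤ) ∣ 2 := dvd_rfl
  have h₂' : (2 : ℤ) ∣ -2 := dvd_neg.2 dvd_rfl
  -- `g 0 0` is odd and `g 1 0` is even and nonzero, so `|g 0 0| ≠ |g 1 0|` and subtracting twice
  -- the smaller from the larger, with the right sign, decreases it.
  have : ((g 0 0 + 2 * g 1 0).natAbs < (g 0 0).natAbs ∨
        (g 0 0 - 2 * g 1 0).natAbs < (g 0 0).natAbs) ∨
      ((g 1 0 + 2 * g 0 0).natAbs < (g 1 0).natAbs ∨
        (g 1 0 - 2 * g 0 0).natAbs < (g 1 0).natAbs) := by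
    omega
  rcases this with (h | h) | (h | h)
  · refine step _ (upper_mem_range_sanov h₂) (upper_mem_Gamma_two h₂) ?_ ?_ <;>
      rw [coe_upper_mul] <;> simp <;> omega
  · refine step _ (upper_mem_range_sanov h₂') (upper_mem_Gamma_two h₂') ?_ ?_ <;>
      rw [coe_upper_mul] <;> simp <;> omega
  · refine step _ (lower_mem_range_sanov h₂) (lower_mem_Gamma_two h₂) ?_ ?_ <;>
      rw [coe_lower_mul] <;> simp <;> omega
  · refine step _ (lower_mem_range_sanov h₂') (lower_mem_Gamma_two h₂') ?_ ?_ <;>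
      rw [coe_lower_mul] <;> simp <;> omega

lemma Gamma_four_le_range_sanov : Gamma 4 ≤ sanov.range := fun g hg =>
  mem_range_sanov_of_mem_Gamma_two (Gamma_le_Gamma_of_dvd (by norm_num) hg)
    (by simpa using mem_Gamma_iff_dvd.1 hg 0 0)

instance : sanov.range.FiniteIndex := Subgroup.finiteIndex_of_le Gamma_four_le_range_sanov

section Reduction

variable {R : Type*} [CommRing R]

lemma map_sanov_of_true_zpow (n : ℤ) :
    SpecialLinearGroup.map (Int.castRingHom R) (sanov (FreeGroup.of true ^ n)) =
      upper (2 * n : R) := by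
  rw [sanov_of_true_zpow, map_upper, eq_intCast, Int.cast_mul, Int.cast_ofNat]

lemma map_sanov_of_false_zpow (n : ℤ) :
    SpecialLinearGroup.map (Int.castRingHom R) (sanov (FreeGroup.of false ^ n)) =
      lower (2 * n : R) := by
  rw [sanov_of_false_zpow, map_lower, eq_intCast, Int.cast_mul, Int.cast_ofNat]

lemma map_sanov_of_false :
    SpecialLinearGroup.map (Int.castRingHom R) (sanov (FreeGroup.of false)) = lower 2 := by
  simpa using map_sanov_of_false_zpow (R := R) 1

-- Where `2 i = 1`, its image is `w 1 * w (-i) = diag(2, i)`, where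
-- `w t = upper t * lower (-1/t) * upper t`.
def diagWord (i : ℤ) : FreeGroup Bool :=
  FreeGroup.of true ^ i * FreeGroup.of false ^ (-i) * FreeGroup.of true ^ i *
    (FreeGroup.of true ^ (-(i * i)) * FreeGroup.of false * FreeGroup.of true ^ (-(i * i)))

open scoped commutatorElement

def witnessWord (i s r : ℤ) : FreeGroup Bool :=
  FreeGroup.of true ^ r * ⁅diagWord i, FreeGroup.of true ^ s⁆⁻¹

lemma coe_map_sanov_diagWord {i : ℤ} (hi : 2 * (i : R) = 1) :
    (SpecialLinearGroup.map (Int.castRingHom R) (sanov (diagWord i)) :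
      Matrix (Fin 2) (Fin 2) R) = !![2, 0; 0, (i : R)] := by
  have e₁ : 2 * -(i : R) = -1 := by linear_combination -hi
  have e₂ : 2 * -((i : R) * i) = -i := by linear_combination -(i : R) * hi
  simp only [diagWord, map_mul, map_sanov_of_true_zpow, map_sanov_of_false_zpow,
    map_sanov_of_false, Int.cast_neg, Int.cast_mul, hi, e₁, e₂]
  ext a b; fin_cases a <;> fin_cases b <;> simp [mul_apply, Fin.sum_univ_two] <;>
    first | linear_combination hi | linear_combination -hi | linear_combination -(i : R) * hi

lemma commutatorElement_map_sanov_diagWord_upper {i : ℤ} (hi : 2 * (i : R) = 1) (t : R) :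
    ⁅SpecialLinearGroup.map (Int.castRingHom R) (sanov (diagWord i)), upper t⁆ =
      upper (3 * t) := by
  set D := SpecialLinearGroup.map (Int.castRingHom R) (sanov (diagWord i))
  have hD : D * upper t = upper (4 * t) * D := by
    ext a b; fin_cases a <;> fin_cases b <;>
      simp [D, coe_map_sanov_diagWord hi, mul_apply, Fin.sum_univ_two]
    linear_combination -2 * t * hi
  rw [commutatorElement_def, hD, mul_inv_cancel_right, upper_inv, upper_mul_upper]
  ring_nf

lemma map_sanov_witnessWord_of_mul_eq_one {i s r : ℤ} (hi : 2 * (i : R) = 1)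
    (hs : 3 * (s : R) = 1) (hr : (r : R) = 1) :
    SpecialLinearGroup.map (Int.castRingHom R) (sanov (witnessWord i s r)) = 1 := by
  simp only [witnessWord, map_mul, map_inv, map_commutatorElement, map_sanov_of_true_zpow,
    commutatorElement_map_sanov_diagWord_upper hi, hr, upper_inv, upper_mul_upper]
  rw [show 2 * (1 : R) + -(3 * (2 * s)) = 0 by linear_combination -2 * hs, upper_zero]

lemma map_sanov_witnessWord_of_eq_zero {i s r : ℤ} (hs : (s : R) = 0) (hr : (r : R) = 0) :
    SpecialLinearGroup.map (Int.castRingHom R) (sanov (witnessWord i s r)) = 1 := by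
  simp only [witnessWord, map_mul, map_inv, map_commutatorElement, map_sanov_of_true_zpow, hs, hr,
    mul_zero, upper_zero, commutatorElement_one_right, inv_one, one_mul]

end Reduction

lemma exists_witnessWord_mem_Gamma {p : ℕ} (hp : p.Prime) (hp2 : p ≠ 2) (hp3 : p ≠ 3) {N : ℕ}
    (hN : N ≠ 0) : ∃ i s r : ℤ, sanov (witnessWord i s r) ∈ Gamma N ∧ (r : ZMod p) = 1 := by
  obtain ⟨k, M, hpM, rfl⟩ := Nat.exists_eq_pow_mul_and_not_dvd hN p hp.ne_one
  have hpM' : p.Coprime M := (Nat.Prime.coprime_iff_not_dvd hp).2 hpM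
  have hcop : ∀ q : ℕ, q.Prime → q ≠ p → IsCoprime (q : ℤ) ((p : ℤ) ^ k) := fun q hq hqp =>
    IsCoprime.pow_right (Nat.isCoprime_iff_coprime.2 ((Nat.coprime_primes hq hp).2 hqp))
  obtain ⟨i, i', hi⟩ := hcop 2 Nat.prime_two hp2.symm
  obtain ⟨s, s', hs⟩ := hcop 3 Nat.prime_three hp3.symm
  obtain ⟨u, v, huv⟩ := Nat.isCoprime_iff_coprime.2 (Nat.Coprime.pow_left (k + 1) hpM')
  have cast_eq {n : ℕ} {x : ℤ} (y : ℤ) (h : (n : ℤ) ∣ y - x) : (x : ZMod n) = y :=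
    (ZMod.intCast_eq_intCast_iff_dvd_sub _ _ _).2 h
  refine ⟨i, v * M * s, v * M,
    Gamma_inf_Gamma_le_Gamma_mul (Nat.Coprime.pow_left k hpM') ⟨?_, ?_⟩, ?_⟩
  · apply map_sanov_witnessWord_of_mul_eq_one
    · exact_mod_cast cast_eq (n := p ^ k) 1 ⟨i', by push_cast at hi ⊢; linear_combination -hi⟩
    · exact_mod_cast cast_eq (n := p ^ k) 1 ⟨s' + 3 * s * u * p, by
        push_cast at hs huv ⊢; linear_combination -hs - 3 * s * huv⟩
    · exact_mod_cast cast_eq (n := p ^ k) 1 ⟨u * p, by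
        push_cast at huv ⊢; linear_combination -huv⟩
  · apply map_sanov_witnessWord_of_eq_zero
    · exact_mod_cast cast_eq (n := M) 0 ⟨-v * s, by ring⟩
    · exact_mod_cast cast_eq (n := M) 0 ⟨-v, by ring⟩
  · exact_mod_cast cast_eq (n := p) 1 ⟨u * p ^ k, by push_cast at huv ⊢; linear_combination -huv⟩

section NoncongruenceSubgroup

variable (p : ℕ)

def exponentSumMod : FreeGroup Bool →* Multiplicative (ZMod p) :=
  FreeGroup.lift fun b => cond b (Multiplicative.ofAdd 1) 1

lemma exponentSumMod_witnessWord (i s r : ℤ) :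
    exponentSumMod p (witnessWord i s r) = Multiplicative.ofAdd (r : ZMod p) := by
  rw [witnessWord, map_mul, map_inv, map_commutatorElement,
    commutatorElement_eq_one_iff_commute.2 (Commute.all _ _), inv_one, mul_one, map_zpow,
    exponentSumMod, FreeGroup.lift_apply_of, cond_true, ← ofAdd_zsmul, zsmul_one]

def noncongruenceSubgroup : Subgroup SL(2, ℤ) := (exponentSumMod p).ker.map sanov

instance [NeZero p] : (noncongruenceSubgroup p).FiniteIndex where
  index_ne_zero := by
    rw [noncongruenceSubgroup, Subgroup.index_map_of_injective _ sanov_injective]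
    exact mul_ne_zero Subgroup.FiniteIndex.index_ne_zero Subgroup.FiniteIndex.index_ne_zero

variable {p}

theorem not_Gamma_le_noncongruenceSubgroup [hp : Fact p.Prime] (hp2 : p ≠ 2) (hp3 : p ≠ 3)
    {N : ℕ} (hN : N ≠ 0) : ¬ Gamma N ≤ noncongruenceSubgroup p := by
  intro hle
  obtain ⟨i, s, r, hmem, hr⟩ := exists_witnessWord_mem_Gamma hp.out hp2 hp3 hN
  obtain ⟨w, hw, hsanov⟩ := hle hmem
  rw [sanov_injective hsanov, SetLike.mem_coe, MonoidHom.mem_ker, exponentSumMod_witnessWord,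
    hr] at hw
  exact one_ne_zero (ofAdd_eq_one.1 hw)

end NoncongruenceSubgroup

end Noncongruence

/-- There exists a finite-index subgroup of `SL₂(ℤ)` which is not a congruence
subgroup: it contains no kernel of a reduction map `SL₂(ℤ) → SL₂(ℤ/Nℤ)`, `N ≥ 1`. -/
theorem exists_noncongruence_finite_index_subgroup :
    ∃ Γ : Subgroup SL(2, ℤ), Γ.FiniteIndex ∧
      ∀ N : ℕ, 1 ≤ N →
        ¬ (MonoidHom.ker
            (Matrix.SpecialLinearGroup.map (n := Fin 2) (Int.castRingHom (ZMod N))) ≤ Γ) := by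
  have : Fact (Nat.Prime 5) := ⟨Nat.prime_five⟩
  exact ⟨Noncongruence.noncongruenceSubgroup 5, inferInstance, fun N hN =>
    Noncongruence.not_Gamma_le_noncongruenceSubgroup (by norm_num) (by norm_num) (by omega)⟩
end

section
/- For every integer m ≥ 1 there is no surjective group homomorphism from SL₂(ℤ/mℤ) onto the symmetric group S₇; that is, S₇ is not a quotient of SL₂(ℤ/mℤ) for any m. -/
/-!
By the Chinese remainder theorem, `SL₂(ℤ/ab) ≅ SL₂(ℤ/a) × SL₂(ℤ/b)` for coprime `a` and `b`. The
images of the two factors in `Sₙ` are commuting normal subgroups; every nontrivial normal subgroup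
of `Sₙ` (`n ≥ 5`) contains the non-abelian group `Aₙ`, so one image is trivial and the other
factor already surjects. This reduces the claim to `m = p ^ (k + 1)`. There the kernel of the
reduction `SL₂(ℤ/p^(k+1)) → SL₂(𝔽ₚ)` is a `p`-group, since `(1 + p A) ^ p ^ k = 1`, and `Sₙ` has
no nontrivial normal `p`-subgroup, so a surjection onto `Sₙ` factors through `SL₂(𝔽ₚ)`. For
`p ≥ 5` the group `SL₂(𝔽ₚ)` is perfect while `Sₙ` is not, and for `p ≤ 3` it has at most
`3 ^ 4 < 5!` elements.
-/

open Function Equiv Matrix Matrix.SpecialLinearGroup MonoidHom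
open scoped MatrixGroups

open Polynomial in
theorem one_add_natCast_mul_pow_pow_eq_one {A : Type*} [Ring A] {p k : ℕ}
    (hp : (p : A) ^ (k + 1) = 0) (a : A) : (1 + p * a) ^ p ^ k = 1 := by
  -- `A` need not be commutative, so the congruence is proved in `ℤ[X]` and evaluated at `a`.
  obtain ⟨q, hq⟩ := dvd_sub_pow_of_dvd_sub (R := ℤ[X]) (p := p) (a := 1 + (p : ℤ[X]) * X)
    (b := 1) (Dvd.intro X (by ring)) k
  have := congrArg (aeval a) hq
  simp only [map_sub, map_pow, map_add, map_one, map_mul, map_natCast, aeval_X, one_pow] at this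
  rwa [hp, zero_mul, sub_eq_zero] at this

theorem MonoidHom.exists_surjective_of_ker_le {G H K : Type*} [Group G] [Group H] [Group K]
    {π : G →* H} (hπ : Surjective π) {f : G →* K} (hf : Surjective f) (h : π.ker ≤ f.ker) :
    ∃ g : H →* K, Surjective g := by
  refine ⟨π.liftOfRightInverse (surjInv hπ) (rightInverse_surjInv hπ) ⟨f, h⟩, fun z => ?_⟩
  obtain ⟨x, rfl⟩ := hf z
  exact ⟨π x, π.liftOfRightInverse_comp_apply _ _ _ x⟩

namespace Equiv.Perm

variable {α : Type*} [Fintype α] [DecidableEq α]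

theorem eq_bot_or_eq_bot_of_le_centralizer (hα : 5 ≤ Nat.card α)
    {N₁ N₂ : Subgroup (Perm α)} [N₁.Normal] [N₂.Normal] (h : N₁ ≤ Subgroup.centralizer N₂) :
    N₁ = ⊥ ∨ N₂ = ⊥ := by
  by_contra! hN
  have hA₁ := alternatingGroup_le_of_normal hα (N₁.nontrivial_iff_ne_bot.mpr hN.1)
  have hA₂ := alternatingGroup_le_of_normal hα (N₂.nontrivial_iff_ne_bot.mpr hN.2)
  have : IsMulCommutative (alternatingGroup α) := Subgroup.le_centralizer_iff_isMulCommutative.mp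
    (hA₁.trans (h.trans (Subgroup.centralizer_le hA₂)))
  have := alternatingGroup.isMulCommutative_iff_card_le_three.mp this
  omega

theorem eq_bot_of_isPGroup (hα : 5 ≤ Nat.card α) {p : ℕ} [Fact p.Prime]
    {N : Subgroup (Perm α)} [N.Normal] (hN : IsPGroup p N) : N = ⊥ := by
  by_contra hN₁
  have hA := alternatingGroup_le_of_normal hα (N.nontrivial_iff_ne_bot.mpr hN₁)
  have : Nontrivial (alternatingGroup α) := alternatingGroup.nontrivial_of_three_le_card (by omega)
  have := (hN.to_le hA).center_nontrivial
  rw [alternatingGroup.center_eq_bot (by omega)] at this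
  exact (Subgroup.nontrivial_iff_ne_bot _).mp this rfl

theorem not_isPerfect [Nontrivial α] : ¬ Group.IsPerfect (Perm α) := by
  intro h
  obtain ⟨a, b, hab⟩ := exists_pair_ne α
  have := Abelianization.commutator_subset_ker sign (Group.IsPerfect.mem_commutator (g := swap a b))
  simp [sign_swap hab] at this

theorem surjective_comp_inl_or_inr {G₁ G₂ : Type*} [Group G₁] [Group G₂]
    (hα : 5 ≤ Nat.card α) {f : G₁ × G₂ →* Perm α} (hf : Surjective f) :
    Surjective (f.comp (inl G₁ G₂)) ∨ Surjective (f.comp (inr G₁ G₂)) := by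
  have := (snd G₁ G₂).normal_ker.map f hf
  have := (fst G₁ G₂).normal_ker.map f hf
  have hcomm : (snd G₁ G₂).ker.map f ≤ Subgroup.centralizer ((fst G₁ G₂).ker.map f) := by
    rintro _ ⟨x, hx, rfl⟩ _ ⟨y, hy, rfl⟩
    rw [SetLike.mem_coe, mem_ker, coe_snd] at hx
    rw [SetLike.mem_coe, mem_ker, coe_fst] at hy
    rw [← map_mul, ← map_mul]
    congr 1
    ext <;> simp [hx, hy]
  have hsplit (x : G₁) (y : G₂) : f (x, y) = f (x, 1) * f (1, y) := by
    rw [← map_mul, Prod.mk_mul_mk, mul_one, one_mul]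
  refine (eq_bot_or_eq_bot_of_le_centralizer hα hcomm).symm.imp (fun hbot σ => ?_)
    (fun hbot σ => ?_) <;> obtain ⟨⟨x, y⟩, rfl⟩ := hf σ <;> rw [Subgroup.map_eq_bot_iff] at hbot
  · exact ⟨x, by rw [hsplit, hbot (show (1, y) ∈ (fst G₁ G₂).ker from rfl), mul_one]; rfl⟩
  · exact ⟨y, by rw [hsplit, hbot (show (x, 1) ∈ (snd G₁ G₂).ker from rfl), one_mul]; rfl⟩

end Equiv.Perm

namespace ZMod

theorem exists_eq_mul_of_castHom_eq_zero {m n : ℕ} (h : m ∣ n) {x : ZMod n}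
    (hx : castHom h (ZMod m) x = 0) : ∃ c : ZMod n, x = m * c := by
  rw [← intCast_zmod_cast x, map_intCast, intCast_zmod_eq_zero_iff_dvd] at hx
  obtain ⟨c, hc⟩ := hx
  exact ⟨c, by rw [← intCast_zmod_cast x, hc]; push_cast; rfl⟩

instance isLocalHom_castHom_pow (p k : ℕ) [NeZero p] :
    IsLocalHom (castHom (dvd_pow_self p k.succ_ne_zero) (ZMod p)) where
  map_nonunit x hx := by
    rw [← natCast_zmod_val x, map_natCast, isUnit_iff_coprime] at hx
    rw [← natCast_zmod_val x, isUnit_iff_coprime]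
    exact hx.pow_right _

end ZMod

namespace Matrix.SpecialLinearGroup

variable {n R S : Type*} [Fintype n] [DecidableEq n] [CommRing R] [CommRing S]

theorem map_surjective [Nonempty n] (φ : R →+* S) [IsLocalHom φ] (hφ : Surjective φ) :
    Surjective (map (n := n) φ) := by
  intro B
  set L := (B : Matrix n n S).map (surjInv hφ)
  have hL : L.map φ = B := by ext i j; simp [L, surjInv_eq hφ]
  have hφL : φ L.det = 1 := by rw [RingHom.map_det, RingHom.mapMatrix_apply, hL, B.det_coe]
  have hdet : IsUnit L.det := isUnit_of_map_unit φ _ (hφL ▸ isUnit_one)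
  set d := update (1 : n → R) (Classical.arbitrary n) ↑hdet.unit⁻¹
  have hd : φ ∘ d = 1 := by
    rw [comp_update, ← mul_one (φ _), ← hφL, ← map_mul, hdet.val_inv_mul]
    simp
  refine ⟨⟨L * diagonal d, ?_⟩, Subtype.ext ?_⟩
  · rw [det_mul, det_diagonal, Finset.prod_update_of_mem (Finset.mem_univ _)]
    simp
  · change (L * diagonal d).map φ = B
    rw [Matrix.map_mul, hL, diagonal_map (map_zero φ), show (fun i => φ (d i)) = 1 from hd]
    exact mul_one _

def prodEquiv :
    SpecialLinearGroup n (R × S) ≃* SpecialLinearGroup n R × SpecialLinearGroup n S where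
  toFun A := (map (RingHom.fst R S) A, map (RingHom.snd R S) A)
  invFun B := ⟨of fun i j => (B.1 i j, B.2 i j), Prod.ext
    (((RingHom.fst R S).map_det _).trans B.1.2) (((RingHom.snd R S).map_det _).trans B.2.2)⟩
  left_inv _ := rfl
  right_inv _ := rfl
  map_mul' A B := by simp

theorem natCard_le [Finite R] :
    Nat.card (SpecialLinearGroup n R) ≤ Nat.card R ^ (Fintype.card n ^ 2) := by
  calc Nat.card (SpecialLinearGroup n R) ≤ Nat.card (n → n → R) :=
        Nat.card_le_card_of_injective _ Subtype.val_injective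
    _ = _ := by simp [Nat.card_fun, ← pow_mul, sq]

theorem isPGroup_ker_map_castHom (p k : ℕ) :
    IsPGroup p (map (n := n) (ZMod.castHom (dvd_pow_self p k.succ_ne_zero) (ZMod p))).ker := by
  set φ := ZMod.castHom (dvd_pow_self p k.succ_ne_zero) (ZMod p)
  rintro ⟨g, hg⟩
  refine ⟨k, Subtype.ext (Subtype.ext ?_)⟩
  obtain ⟨A, hA⟩ : ∃ A, (g : Matrix n n (ZMod (p ^ (k + 1)))) = 1 + p * A := by
    have hg1 : ((g : Matrix n n (ZMod (p ^ (k + 1)))) - 1).map φ = 0 := by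
      rw [Matrix.map_sub _ (map_sub φ), Matrix.map_one _ (map_zero φ) (map_one φ),
        show (g : Matrix n n (ZMod (p ^ (k + 1)))).map φ = 1 from congrArg Subtype.val hg,
        sub_self]
    choose c hc using fun i j =>
      ZMod.exists_eq_mul_of_castHom_eq_zero (dvd_pow_self p k.succ_ne_zero)
        (congrFun (congrFun hg1 i) j)
    refine ⟨of c, ?_⟩
    rw [← nsmul_eq_mul]
    ext i j
    rw [add_apply, smul_apply, of_apply, nsmul_eq_mul, ← hc, sub_apply, add_sub_cancel]
  have hp : (p : Matrix n n (ZMod (p ^ (k + 1)))) ^ (k + 1) = 0 := by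
    rw [← Nat.cast_pow, ← map_natCast (algebraMap (ZMod (p ^ (k + 1))) _), ZMod.natCast_self,
      map_zero]
  simp only [SubgroupClass.coe_pow, coe_pow, hA, one_add_natCast_mul_pow_pow_eq_one hp]
  rfl

end Matrix.SpecialLinearGroup

theorem Matrix.SL2.isPerfect {F : Type*} [Field F] (h2 : (2 : F) ≠ 0) (h3 : (3 : F) ≠ 0) :
    Group.IsPerfect SL(2, F) :=
  ⟨SL2.commutator_eq_top h2 fun h => h3 (by linear_combination h)⟩

section Perm

variable {α : Type*} [Fintype α] [DecidableEq α]

theorem not_surjective_SL2_ZMod_prime (hα : 5 ≤ Nat.card α) {p : ℕ} (hp : p.Prime)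
    (f : SL(2, ZMod p) →* Perm α) : ¬ Surjective f := by
  intro hf
  have : Fact p.Prime := ⟨hp⟩
  by_cases h5 : 5 ≤ p
  · have hne (n : ℕ) (hn0 : n ≠ 0) (hnp : n < p) : (n : ZMod p) ≠ 0 := by
      rw [Ne, ZMod.natCast_eq_zero_iff]
      exact Nat.not_dvd_of_pos_of_lt (Nat.pos_of_ne_zero hn0) hnp
    have := SL2.isPerfect (by exact_mod_cast hne 2 (by omega) (by omega))
      (by exact_mod_cast hne 3 (by omega) (by omega) : (3 : ZMod p) ≠ 0)
    have : Nontrivial α := Finite.one_lt_card_iff_nontrivial.mp (by omega)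
    exact Perm.not_isPerfect (Group.IsPerfect.ofSurjective hf)
  · have hp3 : p ≤ 3 := by
      by_contra
      obtain rfl : p = 4 := by omega
      norm_num at hp
    have := calc Nat.factorial 5 ≤ (Nat.card α).factorial := Nat.factorial_le hα
      _ = Nat.card (Perm α) := Nat.card_perm.symm
      _ ≤ Nat.card SL(2, ZMod p) := Nat.card_le_card_of_surjective f hf
      _ ≤ p ^ 4 := by simpa using natCard_le (n := Fin 2) (R := ZMod p)
      _ ≤ 3 ^ 4 := Nat.pow_le_pow_left hp3 4
    simp [Nat.factorial] at this

theorem not_surjective_SL2_ZMod_prime_pow (hα : 5 ≤ Nat.card α) {p : ℕ} (hp : p.Prime) (k : ℕ)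
    (f : SL(2, ZMod (p ^ (k + 1))) →* Perm α) : ¬ Surjective f := by
  intro hf
  have : Fact p.Prime := ⟨hp⟩
  set π := map (n := Fin 2) (ZMod.castHom (dvd_pow_self p k.succ_ne_zero) (ZMod p))
  have := π.normal_ker.map f hf
  have hker : π.ker ≤ f.ker := (Subgroup.map_eq_bot_iff _).mp
    (Perm.eq_bot_of_isPGroup hα ((isPGroup_ker_map_castHom p k).map f))
  obtain ⟨g, hg⟩ := exists_surjective_of_ker_le
    (map_surjective _ (ZMod.castHom_surjective _)) hf hker
  exact not_surjective_SL2_ZMod_prime hα hp g hg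

theorem not_surjective_SL2_ZMod (hα : 5 ≤ Nat.card α) {m : ℕ} (hm : m ≠ 0) :
    ∀ f : SL(2, ZMod m) →* Perm α, ¬ Surjective f := by
  induction m using Nat.recOnPosPrimePosCoprime with
  | prime_pow p k hp hk =>
    obtain ⟨k, rfl⟩ := Nat.exists_eq_add_one_of_ne_zero hk.ne'
    exact not_surjective_SL2_ZMod_prime_pow hα hp k
  | zero => exact absurd rfl hm
  | one =>
    intro f hf
    have : Nontrivial α := Finite.one_lt_card_iff_nontrivial.mp (by omega)
    have : Subsingleton SL(2, ZMod 1) := ⟨fun A B => Subtype.ext (Subsingleton.elim _ _)⟩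
    exact not_subsingleton _ hf.subsingleton
  | coprime a b ha hb hab iha ihb =>
    intro f hf
    set e := ZMod.chineseRemainder hab
    have := isLocalHom_of_leftInverse (f := e.symm.toRingHom) e e.apply_symm_apply
    have hF : Surjective ((f.comp (map e.symm.toRingHom)).comp
        (prodEquiv (n := Fin 2)).symm.toMonoidHom) :=
      hf.comp ((map_surjective e.symm.toRingHom e.symm.surjective).comp
        (prodEquiv (n := Fin 2)).symm.surjective)
    rcases Perm.surjective_comp_inl_or_inr hα hF with h | h
    · exact iha (by omega) _ h
    · exact ihb (by omega) _ h

end Perm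

/-- For every `m ≥ 1` there is no surjective group homomorphism from
`SL₂(ℤ/mℤ)` onto the symmetric group `S₇`. -/
theorem no_surjection_SL2_ZMod_onto_S7 (m : ℕ) (hm : 1 ≤ m) :
    ∀ f : Matrix.SpecialLinearGroup (Fin 2) (ZMod m) →* Equiv.Perm (Fin 7),
      ¬ Function.Surjective f :=
  not_surjective_SL2_ZMod (by simp) (by omega)
end

section
/- For every prime p ≥ 5, the projective special linear group PSL₂(ℤ/pℤ), i.e. the quotient of SL₂(ℤ/pℤ) by its center, is a simple group. -/
/-- For every prime `p ≥ 5`, the quotient of `SL₂(ℤ/pℤ)` by its center,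
i.e. `PSL₂(ℤ/pℤ)`, is a simple group. -/
theorem PSL2_ZMod_p_simple (p : ℕ) (hp : p.Prime) (hp5 : 5 ≤ p) :
    IsSimpleGroup
      (Matrix.SpecialLinearGroup (Fin 2) (ZMod p) ⧸
        Subgroup.center (Matrix.SpecialLinearGroup (Fin 2) (ZMod p))) :=
  have : Fact p.Prime := ⟨hp⟩
  Matrix.ProjectiveSpecialLinearGroup.rank_two_simple (by rw [Nat.card_zmod]; omega)
end

section
/- The group SL₂(ℤ) admits the free presentation ⟨s, u | s⁴ = 1, u⁶ = 1, s² = u³⟩: the group defined by generators s, u subject to the relators s⁴, u⁶, s²u⁻³ is isomorphic to SL₂(ℤ) via an isomorphism sending s to S and u to U. -/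
/-! The map `s ↦ S`, `u ↦ ST` is onto because `S` and `T` generate `SL₂(ℤ)`. For injectivity,
note that `s²` is central; the quotient by `⟨s²⟩` is generated by the images of `s` and `u`, of
orders 2 and 3. Let it act on `ℍ` through `SL₂(ℤ)`: `S` maps `{re < 0}` into `{re > 0}`, while
`ST` and `(ST)² = T⁻¹S` map `{re > 0}` into `{re < 0}`. By ping-pong the quotient therefore acts
faithfully (it is `ℤ/2 ∗ ℤ/3`), so the kernel lies in `⟨s²⟩ = {1, s²}`, and `s² ↦ S² = -1 ≠ 1`. -/

open Matrix MatrixGroups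

/-- The relators `s⁴`, `u⁶`, `s²u⁻³` in the free group on two generators
(`true ↦ s`, `false ↦ u`). -/
def sl2zRels : Set (FreeGroup Bool) :=
  {(FreeGroup.of true) ^ 4, (FreeGroup.of false) ^ 6,
    (FreeGroup.of true) ^ 2 * ((FreeGroup.of false) ^ 3)⁻¹}

open ModularGroup UpperHalfPlane Subgroup Monoid

section

variable {G : Type*} [Group G]

lemma exists_lt_eq_pow_of_mem_zpowers {a b : G} {n : ℕ} (hn : 0 < n) (ha : a ^ n = 1)
    (hb : b ∈ zpowers a) : ∃ k < n, b = a ^ k := by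
  classical
  obtain ⟨k, hk, rfl⟩ := Finset.mem_image.mp
    ((isOfFinOrder_iff_pow_eq_one.mpr ⟨n, hn, ha⟩).mem_zpowers_iff_mem_range_orderOf.mp hb)
  exact ⟨k, (Finset.mem_range.mp hk).trans_le (orderOf_le_of_pow_eq_one hn ha), rfl⟩

lemma Subgroup.normal_zpowers_of_mem_center {g : G} (hg : g ∈ center G) :
    (zpowers g).Normal :=
  ⟨fun n hn h => by rwa [mem_center_iff.mp (zpowers_le.mpr hg hn) h, mul_inv_cancel_right]⟩

lemma MonoidHom.injective_of_injective_coprodI_lift {ι K : Type*} [Group K]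
    {H : ι → Subgroup G} (hH : ⨆ i, H i = ⊤) (ρ : G →* K)
    (hρ : Function.Injective (CoprodI.lift fun i => ρ.comp (H i).subtype)) :
    Function.Injective ρ := by
  have hsurj : Function.Surjective (CoprodI.lift fun i => (H i).subtype) := by
    rw [← MonoidHom.range_eq_top, CoprodI.range_eq_iSup]
    simpa using hH
  have hcomp : (CoprodI.lift fun i => ρ.comp (H i).subtype) =
      ρ.comp (CoprodI.lift fun i => (H i).subtype) := by
    ext i h
    simp
  rw [hcomp, MonoidHom.coe_comp] at hρ
  exact hρ.of_comp_right hsurj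

end

namespace UpperHalfPlane

lemma re_S_smul (z : ℍ) : (S • z).re = -z.re / Complex.normSq z := by
  rw [modular_S_smul]
  simp [Complex.inv_re, neg_div]

lemma re_S_smul_pos_iff (z : ℍ) : 0 < (S • z).re ↔ z.re < 0 := by
  rw [re_S_smul, div_pos_iff_of_pos_right (normSq_pos z), neg_pos]

lemma re_S_smul_neg_iff (z : ℍ) : (S • z).re < 0 ↔ 0 < z.re := by
  rw [re_S_smul, neg_div, neg_lt_zero, div_pos_iff_of_pos_right (normSq_pos z)]

lemma S_sq_smul (z : ℍ) : (S ^ 2 : SL(2, ℤ)) • z = z := by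
  rw [show (S ^ 2 : SL(2, ℤ)) = -1 by decide, SL_neg_smul, one_smul]

lemma re_ST_smul_neg {z : ℍ} (hz : 0 < z.re) : ((S * T : SL(2, ℤ)) • z).re < 0 := by
  rw [mul_smul, re_S_smul_neg_iff, modular_T_smul, vadd_re]
  linarith

lemma re_ST_sq_smul_neg {z : ℍ} (hz : 0 < z.re) : ((S * T : SL(2, ℤ)) ^ 2 • z).re < 0 := by
  rw [show (S * T : SL(2, ℤ)) ^ 2 = T ^ (-1 : ℤ) * S by decide, mul_smul, modular_T_zpow_smul,
    vadd_re, Int.cast_neg, Int.cast_one]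
  linarith [(re_S_smul_neg_iff z).mpr hz]

end UpperHalfPlane

namespace SL2ZPresentation

open PresentedGroup

lemma sl2zRels_lift_eq_one :
    ∀ r ∈ sl2zRels, FreeGroup.lift (fun b => cond b S (S * T)) r = (1 : SL(2, ℤ)) := by
  rintro r (rfl | rfl | rfl) <;>
    simp only [map_pow, map_mul, map_inv, FreeGroup.lift_apply_of, cond_true, cond_false] <;> decide

noncomputable def toSL2Z : PresentedGroup sl2zRels →* SL(2, ℤ) :=
  toGroup sl2zRels_lift_eq_one

lemma toSL2Z_of (b : Bool) : toSL2Z (of b) = cond b S (S * T) :=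
  toGroup.of _

lemma toSL2Z_surjective : Function.Surjective toSL2Z := by
  rw [← MonoidHom.range_eq_top, eq_top_iff, ← SpecialLinearGroup.SL2Z_generators, closure_le]
  rintro _ (rfl | rfl)
  · exact ⟨of true, toSL2Z_of true⟩
  · exact ⟨(of true)⁻¹ * of false, by simp [toSL2Z_of]⟩

lemma of_true_pow_four : (of true : PresentedGroup sl2zRels) ^ 4 = 1 := by
  have := one_of_mem (rels := sl2zRels) (Set.mem_insert _ _)
  rwa [map_pow] at this

lemma of_true_sq_eq_of_false_pow_three :
    (of true : PresentedGroup sl2zRels) ^ 2 = of false ^ 3 := by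
  have := mk_eq_mk_of_mul_inv_mem (rels := sl2zRels)
    (x := FreeGroup.of true ^ 2) (y := FreeGroup.of false ^ 3) (by simp [sl2zRels])
  rwa [map_pow, map_pow] at this

lemma of_true_sq_mem_center : (of true : PresentedGroup sl2zRels) ^ 2 ∈ Subgroup.center _ := by
  rw [← centralizer_univ, ← coe_top, ← closure_range_of, centralizer_closure, mem_centralizer_iff]
  rintro _ ⟨_ | _, rfl⟩
  · rw [of_true_sq_eq_of_false_pow_three, ← pow_succ, ← pow_succ']
  · rw [← pow_succ, ← pow_succ']

instance : (zpowers ((of true : PresentedGroup sl2zRels) ^ 2)).Normal :=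
  normal_zpowers_of_mem_center of_true_sq_mem_center

abbrev ModCenter := PresentedGroup sl2zRels ⧸ zpowers ((of true : PresentedGroup sl2zRels) ^ 2)

noncomputable def toPerm : ModCenter →* Equiv.Perm ℍ :=
  QuotientGroup.lift _ ((MulAction.toPermHom SL(2, ℤ) ℍ).comp toSL2Z) <| by
    rw [zpowers_le, MonoidHom.mem_ker]
    refine Equiv.ext fun z => ?_
    change toSL2Z (of true ^ 2) • z = z
    rw [map_pow, toSL2Z_of]
    exact S_sq_smul z

lemma toPerm_mk_smul (g : PresentedGroup sl2zRels) (z : ℍ) :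
    toPerm g • z = toSL2Z g • z :=
  rfl

lemma iSup_zpowers_of_eq_top :
    ⨆ b, zpowers ((of b : PresentedGroup sl2zRels) : ModCenter) = ⊤ := by
  rw [eq_top_iff, ← QuotientGroup.range_mk', MonoidHom.range_eq_map, ← closure_range_of,
    MonoidHom.map_closure, closure_le]
  rintro _ ⟨_, ⟨b, rfl⟩, rfl⟩
  exact mem_iSup_of_mem b (mem_zpowers _)

lemma toPerm_of_pow_smul (b : Bool) (k : ℕ) (z : ℍ) :
    toPerm ((of b : PresentedGroup sl2zRels) : ModCenter) ^ k • z = cond b S (S * T) ^ k • z := by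
  rw [← map_pow, ← QuotientGroup.mk_pow, toPerm_mk_smul, map_pow, toSL2Z_of]

lemma of_false_ne_one : ((of false : PresentedGroup sl2zRels) : ModCenter) ≠ 1 := by
  intro h
  have hfix := toPerm_of_pow_smul false 1 ((1 : ℝ) +ᵥ I)
  rw [h, map_one, one_pow, one_smul, pow_one, cond_false] at hfix
  have hneg := re_ST_smul_neg (z := (1 : ℝ) +ᵥ I) (by simp)
  rw [← hfix, vadd_re, I_re] at hneg
  linarith

lemma of_true_pow_two : ((of true : PresentedGroup sl2zRels) : ModCenter) ^ 2 = 1 := by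
  rw [← QuotientGroup.mk_pow, QuotientGroup.eq_one_iff]
  exact mem_zpowers _

lemma of_false_pow_three : ((of false : PresentedGroup sl2zRels) : ModCenter) ^ 3 = 1 := by
  rw [← QuotientGroup.mk_pow, ← of_true_sq_eq_of_false_pow_three, QuotientGroup.mk_pow,
    of_true_pow_two]

lemma orderOf_of_false : orderOf ((of false : PresentedGroup sl2zRels) : ModCenter) = 3 :=
  orderOf_eq_prime of_false_pow_three of_false_ne_one

def halfPlane (b : Bool) : Set ℍ := cond b {z | 0 < z.re} {z | z.re < 0}

lemma coprodI_lift_toPerm_injective : Function.Injective (CoprodI.lift fun b =>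
    toPerm.comp (zpowers ((of b : PresentedGroup sl2zRels) : ModCenter)).subtype) := by
  refine CoprodI.lift_injective_of_ping_pong _ (Or.inr ⟨false, ?_⟩) halfPlane ?_ ?_ ?_
  · have hcard := (Nat.card_zpowers _).trans orderOf_of_false
    have : Finite (zpowers ((of false : PresentedGroup sl2zRels) : ModCenter)) :=
      Nat.finite_of_card_ne_zero (by rw [hcard]; norm_num)
    rw [← Nat.cast_card, hcard]
    norm_num
  · rintro (_ | _)
    · exact ⟨(-1 : ℝ) +ᵥ I, by simp [halfPlane]⟩
    · exact ⟨(1 : ℝ) +ᵥ I, by simp [halfPlane]⟩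
  · rintro (_ | _) (_ | _) hij <;> simp only [ne_eq, not_true_eq_false] at hij <;>
      exact Set.disjoint_left.mpr fun z h1 h2 => by
        simp only [halfPlane, cond_true, cond_false, Set.mem_ofPred_eq] at h1 h2
        linarith
  · rintro (_ | _) (_ | _) hij ⟨h, hh⟩ hne _ ⟨z, hz, rfl⟩ <;>
      simp only [ne_eq, not_true_eq_false] at hij
    · obtain ⟨k, hk, rfl⟩ := exists_lt_eq_pow_of_mem_zpowers three_pos of_false_pow_three hh
      simp only [halfPlane, cond_false, Set.mem_ofPred_eq, MonoidHom.comp_apply, subtype_apply,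
        map_pow, toPerm_of_pow_smul]
      interval_cases k
      · exact absurd rfl hne
      · rw [pow_one]
        exact re_ST_smul_neg hz
      · exact re_ST_sq_smul_neg hz
    · obtain ⟨k, hk, rfl⟩ := exists_lt_eq_pow_of_mem_zpowers two_pos of_true_pow_two hh
      simp only [halfPlane, cond_true, Set.mem_ofPred_eq, MonoidHom.comp_apply, subtype_apply,
        map_pow, toPerm_of_pow_smul]
      interval_cases k
      · exact absurd rfl hne
      · rw [pow_one]
        exact (re_S_smul_pos_iff z).mpr hz

lemma toPerm_injective : Function.Injective toPerm :=
  toPerm.injective_of_injective_coprodI_lift iSup_zpowers_of_eq_top coprodI_lift_toPerm_injective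

lemma toSL2Z_injective : Function.Injective toSL2Z := by
  refine (injective_iff_map_eq_one _).mpr fun g hg => ?_
  have hmk : (g : ModCenter) = 1 := toPerm_injective <| by
    rw [map_one, toPerm, QuotientGroup.lift_mk, MonoidHom.comp_apply, hg, map_one]
  have hsq : ((of true : PresentedGroup sl2zRels) ^ 2) ^ 2 = 1 := by
    rw [← pow_mul]
    exact of_true_pow_four
  obtain ⟨k, hk, rfl⟩ :=
    exists_lt_eq_pow_of_mem_zpowers two_pos hsq ((QuotientGroup.eq_one_iff g).mp hmk)
  interval_cases k
  · exact pow_zero _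
  · rw [pow_one, map_pow, toSL2Z_of] at hg
    exact absurd hg (by decide)

end SL2ZPresentation

/-- `SL₂(ℤ)` has the presentation `⟨s, u | s⁴ = 1, u⁶ = 1, s² = u³⟩`, via an
isomorphism sending `s` to `S` and `u` to `U = S·T`. -/
theorem SL2Z_presentation :
    ∃ φ : PresentedGroup sl2zRels ≃* SL(2, ℤ),
      φ (PresentedGroup.of true) = ModularGroup.S ∧
      φ (PresentedGroup.of false) = ModularGroup.S * ModularGroup.T := by
  open SL2ZPresentation in
  exact ⟨MulEquiv.ofBijective toSL2Z ⟨toSL2Z_injective, toSL2Z_surjective⟩, toSL2Z_of true,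
    toSL2Z_of false⟩
end

section
/- In G = SL₂(ℤ) with 𝒰 = ⟨U⟩ the cyclic subgroup generated by U: the left cosets satisfy S𝒰 = T𝒰, U·S𝒰 = S·T·S𝒰, and U²·S𝒰 = T⁻¹𝒰; the four cosets 𝒰, S𝒰, US𝒰, U²S𝒰 are pairwise distinct; and the double coset 𝒰S𝒰 = {u·S·u' : u, u' ∈ 𝒰} is exactly the union of the three left cosets S𝒰 ∪ US𝒰 ∪ U²S𝒰. -/
/-!
`U = S·T` has order 6 and `U³ = -1` is central. Hence `U^m S 𝒰 = U^(m mod 3) S 𝒰`, so the double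
coset `𝒰 S 𝒰 = ⋃ₘ U^m S 𝒰` is covered by the three cosets with `m = 0, 1, 2`. Two cosets `a𝒰`, `b𝒰`
coincide iff `b = a Uᵏ` for one of the six `k < 6`, which is a finite check on integer matrices,
as are the three coset identities.
-/

open Subgroup DoubleCoset
open scoped Pointwise

section CyclicCosets

variable {G : Type*} [Group G]

lemma exists_lt_pow_mul_pow_zpow_eq_zpow (g : G) {n : ℕ} (hn : 0 < n) (m : ℤ) :
    ∃ k < n, ∃ j : ℤ, g ^ k * (g ^ n) ^ j = g ^ m := by
  have hmod : 0 ≤ m % n ∧ m % n < n :=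
    ⟨Int.emod_nonneg m (by omega), Int.emod_lt_of_pos m (by omega)⟩
  refine ⟨(m % n).toNat, by omega, m / n, ?_⟩
  rw [← zpow_natCast, ← zpow_natCast g n, ← zpow_mul, ← zpow_add, Int.toNat_of_nonneg hmod.1,
    Int.emod_add_mul_ediv]

lemma smul_zpowers_ne_of_forall_ne {g : G} {n : ℕ} (hn : 0 < n) (hg : g ^ n = 1) {a b : G}
    (h : ∀ k < n, b ≠ a * g ^ k) :
    a • (zpowers g : Set G) ≠ b • (zpowers g : Set G) := by
  rw [Ne, leftCoset_eq_iff]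
  rintro ⟨m, hm : g ^ m = a⁻¹ * b⟩
  obtain ⟨k, hk, j, hkj⟩ := exists_lt_pow_mul_pow_zpow_eq_zpow g hn m
  rw [hg, one_zpow, mul_one] at hkj
  exact h k hk (by rw [hkj, hm, mul_inv_cancel_left])

lemma doubleCoset_zpowers_eq_iUnion_pow {g a : G} {n : ℕ} (hn : 0 < n)
    (hc : Commute (g ^ n) a) :
    doubleCoset a (zpowers g) (zpowers g) =
      ⋃ k : Fin n, (g ^ (k : ℕ) * a) • (zpowers g : Set G) := by
  rw [← doubleCoset_union_leftCoset]
  ext x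
  simp only [Set.mem_iUnion]
  constructor
  · rintro ⟨⟨_, m, rfl⟩, hx⟩
    obtain ⟨k, hk, j, hkj⟩ := exists_lt_pow_mul_pow_zpow_eq_zpow g hn m
    have hm : g ^ m * a = g ^ k * a * (g ^ n) ^ j := by
      rw [← hkj, mul_assoc, (hc.zpow_left j).eq, mul_assoc]
    refine ⟨⟨k, hk⟩, ?_⟩
    rwa [hm, mul_smul, smul_coe_set (zpow_mem (pow_mem (mem_zpowers g) n) j)] at hx
  · rintro ⟨k, hx⟩
    exact ⟨⟨g ^ (k : ℕ), pow_mem (mem_zpowers g) k⟩, hx⟩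

end CyclicCosets

open Matrix MatrixGroups ModularGroup

local notation "S" => ModularGroup.S
local notation "T" => ModularGroup.T
local notation "U" => ModularGroup.S * ModularGroup.T

/-- Coset identities in `SL₂(ℤ)` for `𝒰 = ⟨U⟩`, `U = S·T`:
`S𝒰 = T𝒰`, `US𝒰 = STS𝒰`, `U²S𝒰 = T⁻¹𝒰`; the four cosets `𝒰`, `S𝒰`, `US𝒰`,
`U²S𝒰` are pairwise distinct; and the double coset `𝒰S𝒰` is the union
`S𝒰 ∪ US𝒰 ∪ U²S𝒰`. -/
theorem SL2Z_cubic_tree_cosets :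
    (S • ((Subgroup.zpowers U : Subgroup SL(2, ℤ)) : Set SL(2, ℤ)) =
      T • ((Subgroup.zpowers U : Subgroup SL(2, ℤ)) : Set SL(2, ℤ))) ∧
    ((U * S) • ((Subgroup.zpowers U : Subgroup SL(2, ℤ)) : Set SL(2, ℤ)) =
      (S * T * S) • ((Subgroup.zpowers U : Subgroup SL(2, ℤ)) : Set SL(2, ℤ))) ∧
    ((U ^ 2 * S) • ((Subgroup.zpowers U : Subgroup SL(2, ℤ)) : Set SL(2, ℤ)) =
      T⁻¹ • ((Subgroup.zpowers U : Subgroup SL(2, ℤ)) : Set SL(2, ℤ))) ∧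
    (List.Pairwise (· ≠ ·)
      [((Subgroup.zpowers U : Subgroup SL(2, ℤ)) : Set SL(2, ℤ)),
        S • ((Subgroup.zpowers U : Subgroup SL(2, ℤ)) : Set SL(2, ℤ)),
        (U * S) • ((Subgroup.zpowers U : Subgroup SL(2, ℤ)) : Set SL(2, ℤ)),
        (U ^ 2 * S) • ((Subgroup.zpowers U : Subgroup SL(2, ℤ)) : Set SL(2, ℤ))]) ∧
    ({g : SL(2, ℤ) | ∃ u ∈ Subgroup.zpowers U, ∃ u' ∈ Subgroup.zpowers U,
        g = u * S * u'} =
      S • ((Subgroup.zpowers U : Subgroup SL(2, ℤ)) : Set SL(2, ℤ)) ∪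
      (U * S) • ((Subgroup.zpowers U : Subgroup SL(2, ℤ)) : Set SL(2, ℤ)) ∪
      (U ^ 2 * S) • ((Subgroup.zpowers U : Subgroup SL(2, ℤ)) : Set SL(2, ℤ))) := by
  have hU6 : U ^ 6 = 1 := by decide
  have hU3 : Commute (U ^ 3) S := (by decide : U ^ 3 * S = S * U ^ 3)
  refine ⟨?_, rfl, ?_, ?_, ?_⟩
  · rw [leftCoset_eq_iff, (by decide : S⁻¹ * T = U ^ 4)]
    exact pow_mem (mem_zpowers _) 4
  · rw [leftCoset_eq_iff, (by decide : (U ^ 2 * S)⁻¹ * T⁻¹ = U ^ 3)]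
    exact pow_mem (mem_zpowers _) 3
  · have hreps : [1, S, U * S, U ^ 2 * S].Pairwise (fun a b => ∀ k < 6, b ≠ a * U ^ k) := by
      decide
    simpa only [List.map, one_smul] using
      List.pairwise_map.2 (hreps.imp (smul_zpowers_ne_of_forall_ne (by norm_num) hU6))
  · refine (Set.ext fun _ => mem_doubleCoset.symm).trans ?_
    rw [doubleCoset_zpowers_eq_iUnion_pow (by norm_num) hU3]
    ext
    simp [Fin.exists_fin_succ, or_assoc]
end
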